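/- arXiv:2403.11754 — 2 statements merged into one kernel-verified Lean document; each statement's English description precedes it below -/
import Mathlib

section
/- Let x ≠ y ∈ Σ_q^n. Then d_H(R(x), R(y)) = 2 if and only if |I_1(x) ∩ I_1(y)| = 2, where I_1(z) denotes the set of sequences obtainable from z by a single insertion. -/
/-- Entry of a list at 0-indexed integer position, default `0` outside the range. -/
def lget (q : ℕ) [NeZero q] (x : List (Fin q)) (j : ℤ) : Fin q :=
  if 0 ≤ j then x.getD j.toNat 0 else 0

/-- The 2-read vector of a list `x` of length `n`. -/
def read2 (q n : ℕ) [NeZero q] (x : List (Fin q)) : Fin (n + 1) → Multiset (Fin q) :=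
  fun k => {lget q x ((k : ℤ) - 1), lget q x (k : ℤ)}

/-- The single-insertion ball of `z`: all sequences obtained from `z` by
inserting one symbol. -/
def ins1 (q : ℕ) (z : List (Fin q)) : Set (List (Fin q)) :=
  {w | ∃ (u v : List (Fin q)) (a : Fin q), z = u ++ v ∧ w = u ++ a :: v}

open List

section Infra
variable {α : Type*}

lemma splitD_lt {z : List α} {i m : ℕ} (d : α) (a : α) (him : m < i) (hi : i ≤ z.length) :
    (z.take i ++ a :: z.drop i).getD m d = z.getD m d := by
  rw [getD_eq_getElem?_getD, getD_eq_getElem?_getD, getElem?_append, length_take]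
  rw [if_pos (by omega), getElem?_take, if_pos him]

lemma splitD_self {z : List α} {i : ℕ} (d : α) (a : α) (hi : i ≤ z.length) :
    (z.take i ++ a :: z.drop i).getD i d = a := by
  rw [getD_eq_getElem?_getD, getElem?_append_right (by rw [length_take]; omega)]
  rw [length_take, Nat.min_eq_left hi, Nat.sub_self]
  simp

lemma splitD_gt {z : List α} {i m : ℕ} (d : α) (a : α) (him : i ≤ m) (hi : i ≤ z.length) :
    (z.take i ++ a :: z.drop i).getD (m + 1) d = z.getD m d := by
  rw [getD_eq_getElem?_getD, getD_eq_getElem?_getD,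
    getElem?_append_right (by rw [length_take]; omega)]
  rw [length_take, Nat.min_eq_left hi]
  have h1 : m + 1 - i = (m - i) + 1 := by omega
  rw [h1]
  simp only [getElem?_cons_succ, getElem?_drop]
  have h2 : i + (m - i) = m := by omega
  rw [h2]

lemma split_length {z : List α} {i : ℕ} (a : α) (hi : i ≤ z.length) :
    (z.take i ++ a :: z.drop i).length = z.length + 1 := by
  simp [length_take, length_drop]; omega

lemma ext_of_getD {l₁ l₂ : List α} (d : α) (hl : l₁.length = l₂.length)
    (h : ∀ m, l₁.getD m d = l₂.getD m d) : l₁ = l₂ := by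
  apply ext_getElem hl
  intro n h₁ h₂
  have := h n
  rwa [getD_eq_getElem l₁ d h₁, getD_eq_getElem l₂ d h₂] at this

lemma getD_default0 {l : List α} {m : ℕ} (d : α) (h : l.length ≤ m) : l.getD m d = d := by
  rw [getD_eq_getElem?_getD, getElem?_eq_none (by omega)]; rfl

lemma pair_cancel {a c d : α} (h : ({a,c} : Multiset α) = {a,d}) : c = d := by
  have := (Multiset.cons_inj_right a).mp h
  exact Multiset.singleton_inj.mp this

lemma pair_cancel' {a c d : α} (h : ({c,a} : Multiset α) = {d,a}) : c = d := by
  rw [Multiset.pair_comm c a, Multiset.pair_comm d a] at h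
  exact pair_cancel h

lemma pair_eq_of_ne {a b c d : α} (h : ({a,c} : Multiset α) = {b,d})
    (hab : a ≠ b) : a = d ∧ c = b := by
  have ha : a ∈ ({b,d} : Multiset α) := h ▸ (by simp)
  simp only [Multiset.insert_eq_cons, Multiset.mem_cons, Multiset.mem_singleton] at ha
  rcases ha with h1 | h1
  · exact absurd h1 hab
  · subst h1
    rw [Multiset.pair_comm b a] at h
    exact ⟨rfl, pair_cancel h⟩

end Infra

lemma mem_ins1_iff {q : ℕ} {z w : List (Fin q)} :
    w ∈ ins1 q z ↔ ∃ i ≤ z.length, ∃ a : Fin q, w = z.take i ++ a :: z.drop i := by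
  constructor
  · rintro ⟨u, v, a, hz, hw⟩
    refine ⟨u.length, by rw [hz]; simp, a, ?_⟩
    rw [hw, hz, List.take_left, List.drop_left]
  · rintro ⟨i, hi, a, hw⟩
    exact ⟨z.take i, z.drop i, a, (List.take_append_drop i z).symm, hw⟩

section Main

variable {q : ℕ} [NeZero q]

/-- the alternating-swap structure predicate -/
def altP (x y : List (Fin q)) (i j : ℕ) : Prop :=
  i < j ∧ j ≤ x.length ∧
  (∀ m, m < i ∨ j ≤ m → x.getD m 0 = y.getD m 0) ∧
  x.getD i 0 ≠ y.getD i 0 ∧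
  (∀ m, i ≤ m → m + 1 < j → x.getD (m+1) 0 = y.getD m 0 ∧ y.getD (m+1) 0 = x.getD m 0)

lemma altP_symm {x y : List (Fin q)} {i j : ℕ} (hlen : x.length = y.length)
    (h : altP x y i j) : altP y x i j := by
  obtain ⟨h1, h2, h3, h4, h5⟩ := h
  exact ⟨h1, hlen ▸ h2, fun m hm => (h3 m hm).symm, h4.symm,
    fun m hm hm' => ⟨(h5 m hm hm').2, (h5 m hm hm').1⟩⟩

lemma altP_ne {x y : List (Fin q)} {i j : ℕ} (h : altP x y i j) :
    ∀ m, i ≤ m → m < j → x.getD m 0 ≠ y.getD m 0 := by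
  obtain ⟨h1, h2, h3, h4, h5⟩ := h
  intro m him
  induction m, him using Nat.le_induction with
  | base => exact fun _ => h4
  | succ m him ih =>
    intro hmj
    have hm : m < j := by omega
    obtain ⟨c1, c2⟩ := h5 m him hmj
    rw [c1, c2]
    exact fun hEq => (ih hm) (hEq.symm)

/-- canonical common supersequence -/
def Wxy (x y : List (Fin q)) (c : ℕ) : List (Fin q) :=
  x.take c ++ (y.getD c 0) :: x.drop c

lemma mem_ins1_of_pointwise {z w : List (Fin q)} {j : ℕ} (hj : j ≤ z.length)
    (hlen : w.length = z.length + 1)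
    (h1 : ∀ m, m < j → w.getD m 0 = z.getD m 0)
    (h2 : ∀ m, j ≤ m → w.getD (m+1) 0 = z.getD m 0) : w ∈ ins1 q z := by
  rw [mem_ins1_iff]
  refine ⟨j, hj, w.getD j 0, ?_⟩
  apply ext_of_getD (0 : Fin q)
  · rw [hlen, split_length _ hj]
  · intro m
    rcases lt_trichotomy m j with hm | hm | hm
    · rw [splitD_lt _ _ hm hj]; exact h1 m hm
    · subst hm; rw [splitD_self _ _ hj]
    · obtain ⟨m', rfl⟩ : ∃ m', m = m' + 1 := ⟨m - 1, by omega⟩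
      rw [splitD_gt _ _ (by omega) hj]
      exact h2 m' (by omega)

lemma ins_unique_half {x y w : List (Fin q)} {i j : ℕ} {a b : Fin q} {c : ℕ}
    (hlen : x.length = y.length)
    (hi : i ≤ x.length) (hj : j ≤ y.length) (hij : i ≤ j)
    (hw1 : w = x.take i ++ a :: x.drop i) (hw2 : w = y.take j ++ b :: y.drop j)
    (hc1 : ∀ m, m < c → x.getD m 0 = y.getD m 0)
    (hc2 : x.getD c 0 ≠ y.getD c 0) : w = Wxy x y c := by
  have hj' : j ≤ y.length := hj
  -- i ≤ c
  have hic : i ≤ c := by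
    by_contra hlt
    push_neg at hlt
    apply hc2
    have e1 : w.getD c 0 = x.getD c 0 := by rw [hw1]; exact splitD_lt _ _ hlt hi
    have e2 : w.getD c 0 = y.getD c 0 := by
      rw [hw2]; exact splitD_lt _ _ (by omega) hj
    rw [← e1, e2]
  -- c < j
  have hcj : c < j := by
    by_contra hge
    push_neg at hge
    apply hc2
    have e1 : w.getD (c+1) 0 = x.getD c 0 := by rw [hw1]; exact splitD_gt _ _ hic hi
    have e2 : w.getD (c+1) 0 = y.getD c 0 := by rw [hw2]; exact splitD_gt _ _ hge hj
    rw [← e1, e2]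
  have hcx : c ≤ x.length := by omega
  apply ext_of_getD (0 : Fin q)
  · rw [hw1, split_length _ hi, Wxy, split_length _ hcx]
  · intro m
    rcases lt_trichotomy m c with hm | hm | hm
    · rw [Wxy, splitD_lt _ _ hm hcx]
      rcases lt_or_ge m i with hmi | hmi
      · rw [hw1, splitD_lt _ _ hmi hi]
      · rw [hw2, splitD_lt _ _ (by omega) hj]
        exact (hc1 m hm).symm
    · subst hm
      rw [Wxy, splitD_self _ _ hcx, hw2, splitD_lt _ _ hcj hj]
    · obtain ⟨m', rfl⟩ : ∃ m', m = m' + 1 := ⟨m - 1, by omega⟩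
      rw [Wxy, splitD_gt _ _ (by omega) hcx, hw1, splitD_gt _ _ (by omega) hi]

lemma ins_unique {x y w : List (Fin q)} {c : ℕ}
    (hlen : x.length = y.length)
    (hw : w ∈ ins1 q x ∩ ins1 q y)
    (hc1 : ∀ m, m < c → x.getD m 0 = y.getD m 0)
    (hc2 : x.getD c 0 ≠ y.getD c 0) : w = Wxy x y c ∨ w = Wxy y x c := by
  obtain ⟨hwx, hwy⟩ := hw
  rw [mem_ins1_iff] at hwx hwy
  obtain ⟨i, hi, a, hw1⟩ := hwx
  obtain ⟨j, hj, b, hw2⟩ := hwy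
  rcases le_total i j with hij | hij
  · exact Or.inl (ins_unique_half hlen hi hj hij hw1 hw2 hc1 hc2)
  · exact Or.inr (ins_unique_half hlen.symm hj hi hij hw2 hw1
      (fun m hm => (hc1 m hm).symm) hc2.symm)

lemma Wxy_ne {x y : List (Fin q)} {c : ℕ}
    (hcx : c ≤ x.length) (hcy : c ≤ y.length)
    (hc2 : x.getD c 0 ≠ y.getD c 0) : Wxy x y c ≠ Wxy y x c := by
  intro h
  apply hc2
  have e1 : (Wxy x y c).getD c 0 = y.getD c 0 := splitD_self _ _ hcx
  have e2 : (Wxy y x c).getD c 0 = x.getD c 0 := splitD_self _ _ hcy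
  rw [h, e2] at e1
  exact e1

lemma Wxy_mem_left {x y : List (Fin q)} {c : ℕ} (hcx : c ≤ x.length) :
    Wxy x y c ∈ ins1 q x :=
  mem_ins1_iff.mpr ⟨c, hcx, y.getD c 0, rfl⟩

lemma Wxy_mem_right {x y : List (Fin q)} {i j : ℕ} (hlen : x.length = y.length)
    (hP : altP x y i j) : Wxy x y i ∈ ins1 q y := by
  obtain ⟨h1, h2, h3, h4, h5⟩ := hP
  have hix : i ≤ x.length := by omega
  apply mem_ins1_of_pointwise (z := y) (j := j) (by omega)
  · rw [Wxy, split_length _ hix]; omega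
  · intro m hm
    rcases lt_trichotomy m i with hmi | hmi | hmi
    · rw [Wxy, splitD_lt _ _ hmi hix]
      exact h3 m (Or.inl hmi)
    · subst hmi
      rw [Wxy, splitD_self _ _ hix]
    · obtain ⟨m', rfl⟩ : ∃ m', m = m' + 1 := ⟨m - 1, by omega⟩
      rw [Wxy, splitD_gt _ _ (by omega) hix]
      exact ((h5 m' (by omega) hm).2).symm
  · intro m hm
    rw [Wxy, splitD_gt _ _ (by omega) hix]
    exact h3 m (Or.inr hm)
lemma altP_of_both {x y : List (Fin q)} {c : ℕ}
    (hlen : x.length = y.length) (hcx : c ≤ x.length)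
    (hc1 : ∀ m, m < c → x.getD m 0 = y.getD m 0)
    (hc2 : x.getD c 0 ≠ y.getD c 0)
    (hWy : Wxy x y c ∈ ins1 q y) (hWx : Wxy y x c ∈ ins1 q x) :
    ∃ i j, altP x y i j := by
  have hcy : c ≤ y.length := by omega
  rw [mem_ins1_iff] at hWy hWx
  obtain ⟨j, hj, b, hw2⟩ := hWy
  obtain ⟨j', hj', b', hw2'⟩ := hWx
  -- c < j
  have hcj : c < j := by
    by_contra hge
    push_neg at hge
    apply hc2
    have e1 : (Wxy x y c).getD (c+1) 0 = x.getD c 0 := splitD_gt _ _ le_rfl hcx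
    have e2 : (Wxy x y c).getD (c+1) 0 = y.getD c 0 := by
      rw [hw2]; exact splitD_gt _ _ hge hj
    rw [← e1, e2]
  have hcj' : c < j' := by
    by_contra hge
    push_neg at hge
    apply hc2
    have e1 : (Wxy y x c).getD (c+1) 0 = y.getD c 0 := splitD_gt _ _ le_rfl hcy
    have e2 : (Wxy y x c).getD (c+1) 0 = x.getD c 0 := by
      rw [hw2']; exact splitD_gt _ _ hge hj'
    rw [← e2, e1]
  -- relations from hw2 : for c ≤ m, m+1 < j : y.getD (m+1) = x.getD m
  have rel1 : ∀ m, c ≤ m → m + 1 < j → y.getD (m+1) 0 = x.getD m 0 := by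
    intro m hm hm'
    have e1 : (Wxy x y c).getD (m+1) 0 = x.getD m 0 := splitD_gt _ _ hm hcx
    have e2 : (Wxy x y c).getD (m+1) 0 = y.getD (m+1) 0 := by
      rw [hw2]; exact splitD_lt _ _ hm' hj
    rw [← e2, e1]
  have eq1 : ∀ m, j ≤ m → x.getD m 0 = y.getD m 0 := by
    intro m hm
    have e1 : (Wxy x y c).getD (m+1) 0 = x.getD m 0 := splitD_gt _ _ (by omega) hcx
    have e2 : (Wxy x y c).getD (m+1) 0 = y.getD m 0 := by
      rw [hw2]; exact splitD_gt _ _ hm hj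
    rw [← e1, e2]
  have rel2 : ∀ m, c ≤ m → m + 1 < j' → x.getD (m+1) 0 = y.getD m 0 := by
    intro m hm hm'
    have e1 : (Wxy y x c).getD (m+1) 0 = y.getD m 0 := splitD_gt _ _ hm hcy
    have e2 : (Wxy y x c).getD (m+1) 0 = x.getD (m+1) 0 := by
      rw [hw2']; exact splitD_lt _ _ hm' hj'
    rw [← e2, e1]
  have eq2 : ∀ m, j' ≤ m → x.getD m 0 = y.getD m 0 := by
    intro m hm
    have e1 : (Wxy y x c).getD (m+1) 0 = y.getD m 0 := splitD_gt _ _ (by omega) hcy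
    have e2 : (Wxy y x c).getD (m+1) 0 = x.getD m 0 := by
      rw [hw2']; exact splitD_gt _ _ hm hj'
    rw [← e2, e1]
  refine ⟨c, min j j', by omega, ?_, ?_, hc2, ?_⟩
  · -- min j j' ≤ x.length
    rw [hlen]
    omega
  · -- agreement
    intro m hm
    rcases hm with hm | hm
    · exact hc1 m hm
    · rcases le_total j j' with h | h
      · exact eq1 m (by omega)
      · exact eq2 m (by omega)
  · -- cross relations
    intro m hm hm'
    exact ⟨rel2 m hm (by omega), rel1 m hm (by omega)⟩

lemma ins_side {x y : List (Fin q)} (hlen : x.length = y.length) (hxy : x ≠ y) :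
    (∃ i j, altP x y i j) ↔ (ins1 q x ∩ ins1 q y).ncard = 2 := by
  constructor
  · rintro ⟨i, j, hP⟩
    obtain ⟨h1, h2, h3, h4, h5⟩ := hP
    have hix : i ≤ x.length := by omega
    have hiy : i ≤ y.length := by omega
    have hc1 : ∀ m, m < i → x.getD m 0 = y.getD m 0 := fun m hm => h3 m (Or.inl hm)
    have hset : ins1 q x ∩ ins1 q y = {Wxy x y i, Wxy y x i} := by
      apply Set.eq_of_subset_of_subset
      · intro w hw
        rcases ins_unique hlen hw hc1 h4 with h | h
        · exact Or.inl h
        · exact Or.inr h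
      · rintro w (rfl | rfl)
        · exact ⟨Wxy_mem_left hix, Wxy_mem_right hlen ⟨h1, h2, h3, h4, h5⟩⟩
        · exact ⟨Wxy_mem_right hlen.symm (altP_symm hlen ⟨h1, h2, h3, h4, h5⟩),
            Wxy_mem_left hiy⟩
    rw [hset]
    exact Set.ncard_pair (Wxy_ne hix hiy h4)
  · intro hcard
    -- get first difference c
    have hex : ∃ m, x.getD m 0 ≠ y.getD m 0 := by
      by_contra hall
      push_neg at hall
      exact hxy (ext_of_getD 0 hlen hall)
    classical
    set c := Nat.find hex with hc
    have hc2 : x.getD c 0 ≠ y.getD c 0 := Nat.find_spec hex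
    have hc1 : ∀ m, m < c → x.getD m 0 = y.getD m 0 := by
      intro m hm
      exact not_not.mp (Nat.find_min hex hm)
    have hcx : c ≤ x.length := by
      by_contra h
      push_neg at h
      apply hc2
      rw [getD_default0 _ (by omega : x.length ≤ c), getD_default0 _ (by omega : y.length ≤ c)]
    have hpair : ({Wxy x y c, Wxy y x c} : Set (List (Fin q))).ncard = 2 :=
      Set.ncard_pair (Wxy_ne hcx (by omega) hc2)
    have hsub : ins1 q x ∩ ins1 q y ⊆ {Wxy x y c, Wxy y x c} := by
      intro w hw
      rcases ins_unique hlen hw hc1 hc2 with h | h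
      · exact Or.inl h
      · exact Or.inr h
    have heq : ins1 q x ∩ ins1 q y = {Wxy x y c, Wxy y x c} := by
      exact Set.eq_of_subset_of_ncard_le hsub (by rw [hcard, hpair])
        ((Set.finite_singleton _).insert _)
    have hW1 : Wxy x y c ∈ ins1 q x ∩ ins1 q y := by rw [heq]; exact Or.inl rfl
    have hW2 : Wxy y x c ∈ ins1 q x ∩ ins1 q y := by rw [heq]; exact Or.inr rfl
    exact altP_of_both hlen hcx hc1 hc2 hW1.2 hW2.1
variable {n : ℕ}

lemma lget_natCast (x : List (Fin q)) (m : ℕ) : lget q x (m : ℤ) = x.getD m 0 := by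
  simp [lget]

lemma lget_neg (x : List (Fin q)) {j : ℤ} (h : j < 0) : lget q x j = 0 := by
  rw [lget, if_neg (by omega)]

lemma read2_val_zero (x : List (Fin q)) (k : Fin (n+1)) (hk : (k : ℕ) = 0) :
    read2 q n x k = {0, x.getD 0 0} := by
  have h1 : (k : ℤ) = ((k : ℕ) : ℤ) := rfl
  rw [read2, h1, hk]
  rw [show ((0:ℕ):ℤ) - 1 = (-1:ℤ) by norm_num, lget_neg x (by norm_num), lget_natCast]

lemma read2_val_succ (x : List (Fin q)) (k : Fin (n+1)) (m : ℕ) (hk : (k : ℕ) = m + 1) :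
    read2 q n x k = {x.getD m 0, x.getD (m+1) 0} := by
  have h1 : (k : ℤ) = ((k : ℕ) : ℤ) := rfl
  rw [read2, h1, hk]
  have h2 : ((m + 1 : ℕ) : ℤ) - 1 = ((m : ℕ) : ℤ) := by push_cast; ring
  rw [h2, lget_natCast, lget_natCast]

lemma hamming_side_mp {x y : List (Fin q)} (hx : x.length = n) (hy : y.length = n)
    {i j : ℕ} (hP : altP x y i j) :
    hammingDist (read2 q n x) (read2 q n y) = 2 := by
  have hne := altP_ne hP
  obtain ⟨h1, h2, h3, h4, h5⟩ := hP
  rw [hx] at h2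
  have hi : i < n + 1 := by omega
  have hj : j < n + 1 := by omega
  set iF : Fin (n+1) := ⟨i, hi⟩
  set jF : Fin (n+1) := ⟨j, hj⟩
  have hfil : (Finset.univ.filter fun k => read2 q n x k ≠ read2 q n y k) = {iF, jF} := by
    ext k
    simp only [Finset.mem_filter, Finset.mem_univ, true_and, Finset.mem_insert,
      Finset.mem_singleton]
    constructor
    · intro hk
      by_contra hcon
      push_neg at hcon
      obtain ⟨hki, hkj⟩ := hcon
      have hki' : (k : ℕ) ≠ i := fun h => hki (Fin.ext h)
      have hkj' : (k : ℕ) ≠ j := fun h => hkj (Fin.ext h)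
      apply hk
      rcases Nat.eq_zero_or_eq_succ_pred (k : ℕ) with h0 | hsucc
      · -- k = 0, so 0 < i
        rw [read2_val_zero x k h0, read2_val_zero y k h0,
          h3 0 (Or.inl (by omega))]
      · set m := (k : ℕ) - 1 with hm
        have hks : (k : ℕ) = m + 1 := by omega
        rw [read2_val_succ x k m hks, read2_val_succ y k m hks]
        rcases lt_trichotomy (m+1) i with hc | hc | hc
        · rw [h3 m (Or.inl (by omega)), h3 (m+1) (Or.inl hc)]
        · omega
        · rcases lt_or_ge (m+1) j with hc2 | hc2
          · -- i < m+1 < j : cross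
            obtain ⟨c1, c2⟩ := h5 m (by omega) hc2
            rw [c1, c2, Multiset.pair_comm]
          · -- m + 1 ≥ j... but k ≠ j so m+1 > j, m ≥ j
            rw [h3 m (Or.inr (by omega)), h3 (m+1) (Or.inr (by omega))]
    · rintro (rfl | rfl)
      · -- read differs at i
        rcases Nat.eq_zero_or_pos i with h0 | hpos
        · rw [read2_val_zero x iF (by simp [iF, h0]), read2_val_zero y iF (by simp [iF, h0])]
          intro hEq
          exact (h0 ▸ h4) (pair_cancel hEq)
        · have hks : (iF : ℕ) = (i - 1) + 1 := by simp [iF]; omega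
          rw [read2_val_succ x iF _ hks, read2_val_succ y iF _ hks]
          have e1 : x.getD (i-1) 0 = y.getD (i-1) 0 := h3 (i-1) (Or.inl (by omega))
          have e2 : i - 1 + 1 = i := by omega
          rw [e1, e2]
          intro hEq
          exact h4 (pair_cancel hEq)
      · -- read differs at j
        have hks : (jF : ℕ) = (j - 1) + 1 := by simp [jF]; omega
        rw [read2_val_succ x jF _ hks, read2_val_succ y jF _ hks]
        have e2 : j - 1 + 1 = j := by omega
        have e1 : x.getD j 0 = y.getD j 0 := h3 j (Or.inr le_rfl)
        rw [e2, e1]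
        intro hEq
        exact hne (j-1) (by omega) (by omega) (pair_cancel' hEq)
  have : hammingDist (read2 q n x) (read2 q n y)
      = (Finset.univ.filter fun k => read2 q n x k ≠ read2 q n y k).card := rfl
  rw [this, hfil]
  exact Finset.card_pair (fun h => by
    have := Fin.val_eq_of_eq h
    simp [iF, jF] at this
    omega)
lemma ham_aux {x y : List (Fin q)} (hx : x.length = n) (hy : y.length = n)
    {k1 k2 : Fin (n+1)} (hlt : (k1 : ℕ) < (k2 : ℕ))
    (hset : (Finset.univ.filter fun k => read2 q n x k ≠ read2 q n y k) = {k1, k2}) :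
    ∃ i j, altP x y i j := by
  set i := (k1 : ℕ) with hidef
  set j := (k2 : ℕ) with hjdef
  have hjn : j < n + 1 := k2.isLt
  have Dk : ∀ k : Fin (n+1), (read2 q n x k ≠ read2 q n y k) ↔ (k = k1 ∨ k = k2) := by
    intro k
    have := Finset.ext_iff.mp hset k
    simpa using this
  have E : ∀ k, k ≠ k1 → k ≠ k2 → read2 q n x k = read2 q n y k := by
    intro k h1 h2
    by_contra h
    rcases (Dk k).mp h with h' | h'
    exacts [h1 h', h2 h']
  have D1 : read2 q n x k1 ≠ read2 q n y k1 := (Dk k1).mpr (Or.inl rfl)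
  have D2 : read2 q n x k2 ≠ read2 q n y k2 := (Dk k2).mpr (Or.inr rfl)
  -- left agreement
  have L : ∀ m, m < i → x.getD m 0 = y.getD m 0 := by
    intro m
    induction m using Nat.strong_induction_on with
    | _ m ih =>
      intro hmi
      have hk : m < n + 1 := by omega
      have hE := E ⟨m, hk⟩ (Fin.ne_of_val_ne (by simpa using by omega))
        (Fin.ne_of_val_ne (by simpa using by omega))
      rcases Nat.eq_zero_or_eq_succ_pred m with h0 | hsucc
      · subst h0
        rw [read2_val_zero x _ rfl, read2_val_zero y _ rfl] at hE
        exact pair_cancel hE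
      · set m' := m - 1 with hm'
        have hms : ((⟨m, hk⟩ : Fin (n+1)) : ℕ) = m' + 1 := by simp; omega
        rw [read2_val_succ x _ m' hms, read2_val_succ y _ m' hms] at hE
        rw [ih m' (by omega) (by omega)] at hE
        have := pair_cancel hE
        rwa [show m' + 1 = m by omega] at this
  -- right agreement
  have R0 : ∀ d m, j ≤ m → n ≤ m + d → x.getD m 0 = y.getD m 0 := by
    intro d
    induction d with
    | zero =>
      intro m hm hn
      rw [getD_default0 _ (by omega), getD_default0 _ (by omega)]
    | succ d ih =>
      intro m hm hn
      rcases le_or_gt n m with h | h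
      · rw [getD_default0 _ (by omega), getD_default0 _ (by omega)]
      · have hk : m + 1 < n + 1 := by omega
        have hE := E ⟨m+1, hk⟩ (Fin.ne_of_val_ne (by simpa using by omega))
          (Fin.ne_of_val_ne (by simpa using by omega))
        have hms : ((⟨m+1, hk⟩ : Fin (n+1)) : ℕ) = m + 1 := rfl
        rw [read2_val_succ x _ m hms, read2_val_succ y _ m hms] at hE
        rw [ih (m+1) (by omega) (by omega)] at hE
        exact pair_cancel' hE
  have R : ∀ m, j ≤ m → x.getD m 0 = y.getD m 0 := fun m hm => R0 (n - m) m hm (by omega)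
  -- middle
  have Q : ∀ m, i ≤ m → m < j →
      (x.getD m 0 ≠ y.getD m 0 ∧
        (i < m → x.getD m 0 = y.getD (m-1) 0 ∧ y.getD m 0 = x.getD (m-1) 0)) := by
    intro m him
    induction m, him using Nat.le_induction with
    | base =>
      intro hij
      refine ⟨?_, fun h => absurd h (lt_irrefl i)⟩
      rcases Nat.eq_zero_or_eq_succ_pred i with h0 | hsucc
      · intro hc
        apply D1
        rw [read2_val_zero x k1 h0, read2_val_zero y k1 h0,
          show (0:ℕ) = i from h0.symm, hc]
      · intro hc
        apply D1
        have hms : (k1 : ℕ) = (i - 1) + 1 := by omega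
        rw [read2_val_succ x k1 _ hms, read2_val_succ y k1 _ hms,
          L (i-1) (by omega), show i - 1 + 1 = i by omega, hc]
    | succ m him ih =>
      intro hj1
      have hxm : x.getD m 0 ≠ y.getD m 0 := (ih (by omega)).1
      have hk : m + 1 < n + 1 := by omega
      have hE := E ⟨m+1, hk⟩ (Fin.ne_of_val_ne (by simpa using by omega))
        (Fin.ne_of_val_ne (by simpa using by omega))
      have hms : ((⟨m+1, hk⟩ : Fin (n+1)) : ℕ) = m + 1 := rfl
      rw [read2_val_succ x _ m hms, read2_val_succ y _ m hms] at hE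
      obtain ⟨e1, e2⟩ := pair_eq_of_ne hE hxm
      -- e1 : x_m = y_{m+1}, e2 : x_{m+1} = y_m
      refine ⟨?_, fun _ => ?_⟩
      · rw [e2, ← e1]
        exact fun h => hxm h.symm
      · constructor
        · rw [show m + 1 - 1 = m by omega]; exact e2
        · rw [show m + 1 - 1 = m by omega]; exact e1.symm
  refine ⟨i, j, by omega, by omega, ?_, (Q i le_rfl (by omega)).1, ?_⟩
  · intro m hm
    rcases hm with hm | hm
    · exact L m hm
    · exact R m hm
  · intro m him hmj
    have hq := Q (m+1) (by omega) hmj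
    obtain ⟨c1, c2⟩ := hq.2 (by omega)
    rw [show m + 1 - 1 = m by omega] at c1 c2
    exact ⟨c1, c2⟩

lemma hamming_side_mpr {x y : List (Fin q)} (hx : x.length = n) (hy : y.length = n)
    (hd : hammingDist (read2 q n x) (read2 q n y) = 2) : ∃ i j, altP x y i j := by
  have hcard : (Finset.univ.filter fun k => read2 q n x k ≠ read2 q n y k).card = 2 := hd
  obtain ⟨k1, k2, hk12, hset⟩ := Finset.card_eq_two.mp hcard
  rcases lt_or_gt_of_ne (fun h : (k1:ℕ) = (k2:ℕ) => hk12 (Fin.ext h)) with hlt | hgt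
  · exact ham_aux hx hy hlt hset
  · rw [Finset.pair_comm] at hset
    exact ham_aux hx hy hgt hset
end Main

theorem stmt4 (q n : ℕ) [NeZero q] (x y : List (Fin q))
    (hx : x.length = n) (hy : y.length = n) (hxy : x ≠ y) :
    hammingDist (read2 q n x) (read2 q n y) = 2 ↔
      (ins1 q x ∩ ins1 q y).ncard = 2 := by
  have hlen : x.length = y.length := by rw [hx, hy]
  constructor
  · intro hd
    exact (ins_side hlen hxy).mp (hamming_side_mpr hx hy hd)
  · intro hc
    obtain ⟨i, j, hP⟩ := (ins_side hlen hxy).mpr hc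
    exact hamming_side_mp hx hy hP
end

section
/- For any positive integer t and any indices 0 ≤ i < j ≤ 2t, the 2-read vectors of g_{i,t} and g_{j,t} have Hamming distance exactly 2, where g_{i,t} is the binary sequence of length 2t consisting of the first i entries of the alternating sequence α_{2t}(01) followed by the last 2t-i entries of α_{2t}(10). -/
/-- The alternating sequence `α_t(ab)` of length `t` starting with `a`. -/
def alt (q : ℕ) (a b : Fin q) : ℕ → List (Fin q)
  | 0 => []
  | t + 1 => a :: alt q b a t

/-- `g_{i,t}`: the first `i` entries of `α_{2t}(01)` followed by the last
`2t - i` entries of `α_{2t}(10)`. -/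
def gseq (q t : ℕ) [NeZero q] (i : ℕ) : List (Fin q) :=
  (alt q 0 1 (2 * t)).take i ++ (alt q 1 0 (2 * t)).drop i

lemma alt_length (q : ℕ) (a b : Fin q) : ∀ n, (alt q a b n).length = n := by
  intro n
  induction n generalizing a b with
  | zero => rfl
  | succ n ih => simp [alt, ih]

lemma alt_take (q : ℕ) : ∀ (n i : ℕ) (a b : Fin q), i ≤ n →
    (alt q a b n).take i = alt q a b i := by
  intro n
  induction n with
  | zero => intro i a b h; interval_cases i; rfl
  | succ n ih =>
    intro i a b h
    match i with
    | 0 => rfl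
    | i + 1 => simp [alt, ih i b a (by omega)]

lemma alt_drop (q : ℕ) : ∀ (n i : ℕ) (a b : Fin q),
    (alt q a b n).drop i = if i % 2 = 0 then alt q a b (n - i) else alt q b a (n - i) := by
  intro n
  induction n with
  | zero => intro i a b; cases i <;> simp [alt]
  | succ n ih =>
    intro i a b
    match i with
    | 0 => simp [alt]
    | i + 1 =>
      have := ih i b a
      simp only [alt, List.drop_succ_cons, this]
      rcases Nat.mod_two_eq_zero_or_one i with h | h <;>
        simp [h, Nat.add_mod, Nat.succ_sub_succ]

lemma alt_getD (q : ℕ) [NeZero q] : ∀ (n : ℕ) (a b : Fin q) (k : ℕ), k < n →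
    (alt q a b n).getD k 0 = if k % 2 = 0 then a else b := by
  intro n
  induction n with
  | zero => intro a b k hk; omega
  | succ n ih =>
    intro a b k hk
    match k with
    | 0 => simp [alt]
    | k + 1 =>
      have := ih b a k (by omega)
      simp only [alt, List.getD_cons_succ, this]
      rcases Nat.mod_two_eq_zero_or_one k with h | h <;>
        (rw [Nat.add_mod, h]; simp)

lemma gseq_length (q t : ℕ) [NeZero q] (i : ℕ) (hi : i ≤ 2 * t) :
    (gseq q t i).length = 2 * t := by
  simp [gseq, alt_length]; omega

lemma gseq_getD (q t : ℕ) [NeZero q] (i : ℕ) (hi : i ≤ 2 * t) (k : ℕ) (hk : k < 2 * t) :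
    (gseq q t i).getD k 0 =
      if k < i then (if k % 2 = 0 then 0 else 1) else (if k % 2 = 0 then 1 else 0) := by
  rw [gseq, alt_take q _ i _ _ hi, alt_drop]
  rcases Nat.lt_or_ge k i with h | h
  · rw [List.getD_append _ _ _ _ (by rw [alt_length]; omega), alt_getD q i 0 1 k h,
      if_pos h]
  · rw [if_neg (show ¬ k < i by omega)]
    rcases Nat.mod_two_eq_zero_or_one i with hp | hp
    · rw [if_pos hp, List.getD_append_right _ _ _ _ (by rw [alt_length]; omega), alt_length,
        alt_getD q _ _ _ _ (by omega)]
      rcases Nat.mod_two_eq_zero_or_one k with h2 | h2 <;> simp [h2] <;> omega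
    · rw [if_neg (by omega), List.getD_append_right _ _ _ _ (by rw [alt_length]; omega), alt_length,
        alt_getD q _ _ _ _ (by omega)]
      rcases Nat.mod_two_eq_zero_or_one k with h2 | h2 <;> simp [h2] <;> omega

lemma lget_nat (q : ℕ) [NeZero q] (x : List (Fin q)) (m : ℕ) :
    lget q x (m : ℤ) = x.getD m 0 := by simp [lget]

set_option linter.unreachableTactic false in
set_option linter.unusedTactic false in
lemma read2_gseq (q t : ℕ) [NeZero q] (ht : 1 ≤ t) (i : ℕ) (hi : i ≤ 2 * t)
    (k : Fin (2 * t + 1)) :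
    read2 q (2 * t) (gseq q t i) k =
      if (k : ℕ) = i then
        (if i = 0 ∨ i = 2 * t then ({0, 1} : Multiset (Fin q))
          else if i % 2 = 0 then {1, 1} else {0, 0})
      else (if (k : ℕ) = 0 ∨ (k : ℕ) = 2 * t then ({0, 0} : Multiset (Fin q)) else {0, 1}) := by
  have hk : (k : ℕ) ≤ 2 * t := by omega
  rw [read2]
  rcases Nat.eq_zero_or_pos (k : ℕ) with h0 | h0
  · have hz : ((k : ℕ) : ℤ) = 0 := by omega
    rw [hz]
    have hneg : lget q (gseq q t i) (0 - 1) = 0 := by simp [lget]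
    rw [hneg, show (0:ℤ) = ((0:ℕ):ℤ) from rfl, lget_nat, gseq_getD q t i hi 0 (by omega)]
    split_ifs <;>
      first
        | rfl
        | omega
        | (exfalso; omega)
        | rw [Multiset.pair_comm]
  · have h1 : ((k : ℕ) : ℤ) - 1 = (((k : ℕ) - 1 : ℕ) : ℤ) := by omega
    rw [h1, lget_nat, lget_nat, gseq_getD q t i hi ((k:ℕ) - 1) (by omega)]
    rcases Nat.lt_or_ge (k : ℕ) (2 * t) with h2 | h2
    · rw [gseq_getD q t i hi (k : ℕ) h2]
      split_ifs <;>
        first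
          | rfl
          | omega
          | (exfalso; omega)
          | rw [Multiset.pair_comm]
    · have he : (k : ℕ) = 2 * t := by omega
      rw [List.getD_eq_default _ _ (by rw [gseq_length q t i hi]; omega)]
      split_ifs <;>
        first
          | rfl
          | omega
          | (exfalso; omega)
          | rw [Multiset.pair_comm]

theorem stmt7 (q t : ℕ) [NeZero q] (hq : 2 ≤ q) (ht : 1 ≤ t)
    (i j : ℕ) (hij : i < j) (hj : j ≤ 2 * t) :
    hammingDist (read2 q (2 * t) (gseq q t i)) (read2 q (2 * t) (gseq q t j)) = 2 := by
  have h01 : (0 : Fin q) ≠ 1 := by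
    obtain ⟨n, rfl⟩ : ∃ n, q = n + 2 := ⟨q - 2, by omega⟩
    simp [Fin.ext_iff]
  have hA : ({0, 1} : Multiset (Fin q)) ≠ {0, 0} := by
    intro h
    have h1 : (1 : Fin q) ∈ ({0, 1} : Multiset (Fin q)) :=
      Multiset.mem_cons_of_mem (Multiset.mem_singleton_self 1)
    rw [h] at h1
    rcases Multiset.mem_cons.mp h1 with h' | h'
    · exact h01 h'.symm
    · exact h01 (Multiset.mem_singleton.mp h').symm
  have hB : ({1, 1} : Multiset (Fin q)) ≠ {0, 1} := by
    intro h
    have h1 : (0 : Fin q) ∈ ({0, 1} : Multiset (Fin q)) := Multiset.mem_cons_self _ _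
    rw [← h] at h1
    rcases Multiset.mem_cons.mp h1 with h' | h'
    · exact h01 h'
    · exact h01 (Multiset.mem_singleton.mp h')
  have hC : ({0, 0} : Multiset (Fin q)) ≠ {0, 1} := by
    intro h
    have h1 : (1 : Fin q) ∈ ({0, 1} : Multiset (Fin q)) :=
      Multiset.mem_cons_of_mem (Multiset.mem_singleton_self 1)
    rw [← h] at h1
    rcases Multiset.mem_cons.mp h1 with h' | h'
    · exact h01 h'.symm
    · exact h01 (Multiset.mem_singleton.mp h').symm
  -- the "defect" value differs from the "standard" value at any position m ≤ 2t
  have hDS : ∀ m : ℕ, m ≤ 2 * t →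
      (if m = 0 ∨ m = 2 * t then ({0, 1} : Multiset (Fin q))
        else if m % 2 = 0 then {1, 1} else {0, 0}) ≠
      (if m = 0 ∨ m = 2 * t then ({0, 0} : Multiset (Fin q)) else {0, 1}) := by
    intro m hm
    split_ifs with h1 h2
    · exact hA
    · exact hB
    · exact hC
  have hI : i < 2 * t + 1 := by omega
  have hJ : j < 2 * t + 1 := by omega
  have key : ∀ k : Fin (2 * t + 1),
      (read2 q (2 * t) (gseq q t i) k ≠ read2 q (2 * t) (gseq q t j) k) ↔
        (k = ⟨i, hI⟩ ∨ k = ⟨j, hJ⟩) := by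
    intro k
    rw [read2_gseq q t ht i (by omega) k, read2_gseq q t ht j hj k]
    constructor
    · intro hne
      by_contra hcon
      push_neg at hcon
      have h1 : (k : ℕ) ≠ i := fun h => hcon.1 (Fin.ext h)
      have h2 : (k : ℕ) ≠ j := fun h => hcon.2 (Fin.ext h)
      rw [if_neg h1, if_neg h2] at hne
      exact hne rfl
    · rintro (rfl | rfl)
      · simp only [Fin.val_mk, if_true]
        rw [if_neg (show ¬ i = j by omega)]
        exact hDS i (by omega)
      · simp only [Fin.val_mk, if_true]
        rw [if_neg (show ¬ j = i by omega)]
        exact fun h => hDS j (by omega) h.symm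
  rw [hammingDist]
  have hset : (Finset.univ.filter fun k : Fin (2 * t + 1) =>
      read2 q (2 * t) (gseq q t i) k ≠ read2 q (2 * t) (gseq q t j) k) =
      {⟨i, hI⟩, ⟨j, hJ⟩} := by
    ext k
    simp only [Finset.mem_filter, Finset.mem_univ, true_and, Finset.mem_insert,
      Finset.mem_singleton]
    exact key k
  rw [hset, Finset.card_insert_of_notMem (by simp [Fin.ext_iff]; omega),
    Finset.card_singleton]
end
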